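/- Let H be a subgroup of a topological group G admitting a countable neighborhood base {V_n : n ∈ ω} (of open sets containing H) with V_{n+1}² ⊆ V_n for all n. Then H is strongly neutral, the quotient map G → H\G is both closed and open, and H\G is metrizable. -/

import Mathlib

/-!
The square condition gives `H * V (n + 1) ⊆ V n`, which is strong neutrality, and strong neutrality
makes `H * C` closed for every closed `C`, i.e. the quotient map is closed; it is open for any
subgroup. For metrizability, the sets `S n = H * (V n ∩ (V n)⁻¹) * H` are open, symmetric, unions of
double cosets, still a neighbourhood base of `H`, and satisfy `S (n + 2) * S (n + 2) ⊆ S n`. The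
relations `Hx ~ₙ Hy ↔ y * x⁻¹ ∈ S n` are therefore a countable base of a uniformity on `H\G`, whose
balls are the images of the sets `S n * x`, so it induces the quotient topology. As `G` is T₁,
`⋂ n, S n = H`, so this uniformity is separated, hence metrizable.
-/

open scoped Pointwise Uniformity Topology SetRel
open Filter Set QuotientGroup

theorem iInter_eq_of_hasBasis_nhdsSet {X ι : Type*} [TopologicalSpace X] [T1Space X] {s : Set X}
    {S : ι → Set X} (h : (𝓝ˢ s).HasBasis (fun _ => True) S) : ⋂ i, S i = s := by
  simpa [nhdsKer, h.ker] using nhdsKer_eq_of_t1Space s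

theorem metrizableSpace_of_hasBasis_nhds_ball {X : Type*} [t : TopologicalSpace X]
    {D : ℕ → SetRel X X} (hanti : Antitone D) (hrefl : ∀ n x, (x, x) ∈ D n)
    (hsymm : ∀ n x y, (x, y) ∈ D n → (y, x) ∈ D n) (hcomp : ∀ n, ∃ m, D m ○ D m ⊆ D n)
    (hsep : ∀ x y, (∀ n, (x, y) ∈ D n) → x = y)
    (hnhds : ∀ x, (𝓝 x).HasBasis (fun _ => True) fun n => UniformSpace.ball x (D n)) :
    TopologicalSpace.MetrizableSpace X := by
  have hD : (⨅ n, 𝓟 (D n)).HasBasis (fun _ => True) D := hasBasis_iInf_principal hanti.directed_ge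
  let core : UniformSpace.Core X := .mk' (⨅ n, 𝓟 (D n))
    (fun r hr x => let ⟨n, _, hn⟩ := hD.mem_iff.1 hr; hn (hrefl n x))
    (fun r hr => let ⟨n, _, hn⟩ := hD.mem_iff.1 hr
      hD.mem_iff.2 ⟨n, trivial, fun p hp => hn (hsymm n _ _ hp)⟩)
    (fun r hr => let ⟨n, _, hn⟩ := hD.mem_iff.1 hr; let ⟨m, hm⟩ := hcomp n
      ⟨D m, hD.mem_of_mem trivial, hm.trans hn⟩)
  let _ : UniformSpace X := .ofCoreEq core t <| TopologicalSpace.ext_nhds fun x => by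
    rw [core.nhds_toTopologicalSpace]
    exact (hnhds x).eq_of_same_basis (hD.comap _)
  have : T0Space X := (t0Space_iff_inseparable X).2 fun x y hxy =>
    hsep x y fun n => show y ∈ UniformSpace.ball x (D n) from
      mem_of_mem_nhds (hxy.nhds_eq.ge ((hnhds x).mem_of_mem trivial))
  have : (𝓤 X).IsCountablyGenerated := hD.isCountablyGenerated
  exact UniformSpace.metrizableSpace

section Monoid

variable {M : Type*} [Monoid M] {W : ℕ → Set M} (h1 : ∀ n, (1 : M) ∈ W n)
  (hsq : ∀ n, W (n + 1) * W (n + 1) ⊆ W n)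
include h1 hsq

theorem antitone_of_mul_subset : Antitone W :=
  antitone_nat_of_succ_le fun n => (subset_mul_left _ (h1 _)).trans (hsq n)

theorem mul_mul_subset_of_mul_subset (n : ℕ) : W (n + 2) * W (n + 2) * W (n + 2) ⊆ W n :=
  calc W (n + 2) * W (n + 2) * W (n + 2) ⊆ W (n + 1) * W (n + 1) :=
        mul_subset_mul (hsq _) (antitone_of_mul_subset h1 hsq (Nat.le_succ _))
    _ ⊆ W n := hsq n

end Monoid

section Group

variable {G : Type*} [Group G]

theorem mul_inter_inv_subset {A B : Set G} (h : A * A ⊆ B) :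
    (A ∩ A⁻¹) * (A ∩ A⁻¹) ⊆ B ∩ B⁻¹ := by
  refine subset_inter ((mul_subset_mul inter_subset_left inter_subset_left).trans h) ?_
  rw [← inv_subset_inv, inv_inv, mul_inv_rev, inter_inv, inv_inv]
  exact (mul_subset_mul inter_subset_right inter_subset_right).trans h

section DoubleCoset

variable {H : Subgroup G} {W : ℕ → Set G} (hHW : ∀ n, (H : Set G) ⊆ W n)
  (hsq : ∀ n, W (n + 1) * W (n + 1) ⊆ W n)
include hHW hsq

theorem coe_mul_mul_coe_subset (n : ℕ) : (H : Set G) * W (n + 2) * H ⊆ W n :=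
  calc (H : Set G) * W (n + 2) * H ⊆ W (n + 2) * W (n + 2) * W (n + 2) := by
        gcongr <;> exact hHW _
    _ ⊆ W n := mul_mul_subset_of_mul_subset (fun n => hHW n H.one_mem) hsq n

theorem doubleCoset_mul_doubleCoset_subset (n : ℕ) :
    (H : Set G) * W (n + 2) * H * (H * W (n + 2) * H) ⊆ H * W n * H :=
  calc (H : Set G) * W (n + 2) * H * (H * W (n + 2) * H)
        = H * (W (n + 2) * H * W (n + 2)) * H := by
        simp only [mul_assoc]
        rw [← mul_assoc (H : Set G) H, coe_mul_coe]
    _ ⊆ H * (W (n + 2) * W (n + 2) * W (n + 2)) * H := by gcongr; exact hHW _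
    _ ⊆ H * W n * H := by
        gcongr
        exact mul_mul_subset_of_mul_subset (fun n => hHW n H.one_mem) hsq n

end DoubleCoset

section RightCosets

variable (H : Subgroup G)

theorem quotient_mk_rightRel_eq_iff {x y : G} :
    Quotient.mk (rightRel H) x = Quotient.mk (rightRel H) y ↔ y * x⁻¹ ∈ H :=
  Quotient.eq.trans rightRel_apply

theorem preimage_image_quotient_mk_rightRel (s : Set G) :
    Quotient.mk (rightRel H) ⁻¹' (Quotient.mk (rightRel H) '' s) = (H : Set G) * s := by
  ext y
  simp only [mem_preimage, mem_image, quotient_mk_rightRel_eq_iff, Set.mem_mul, SetLike.mem_coe]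
  constructor
  · rintro ⟨x, hx, hxy⟩
    exact ⟨y * x⁻¹, hxy, x, hx, inv_mul_cancel_right y x⟩
  · rintro ⟨h, hh, x, hx, rfl⟩
    exact ⟨x, hx, by simpa using hh⟩

def rightCosetEntourage (S : Set G) : SetRel (Quotient (rightRel H)) (Quotient (rightRel H)) :=
  Prod.map (Quotient.mk _) (Quotient.mk _) '' {p | p.2 * p.1⁻¹ ∈ S}

variable {H} {S : Set G} (hS : (H : Set G) * S * H ⊆ S)
include hS

theorem mk_mem_rightCosetEntourage_iff {x y : G} :
    (Quotient.mk _ x, Quotient.mk _ y) ∈ rightCosetEntourage H S ↔ y * x⁻¹ ∈ S := by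
  refine ⟨?_, fun h => ⟨(x, y), h, rfl⟩⟩
  rintro ⟨⟨x', y'⟩, hs, he⟩
  simp only [Prod.map, Prod.mk.injEq, quotient_mk_rightRel_eq_iff] at he
  rw [show y * x⁻¹ = y * y'⁻¹ * (y' * x'⁻¹) * (x * x'⁻¹)⁻¹ by group]
  exact hS (mul_mem_mul (mul_mem_mul he.2 hs) (inv_mem he.1))

theorem ball_mk_rightCosetEntourage (x : G) :
    UniformSpace.ball (Quotient.mk _ x) (rightCosetEntourage H S) =
      Quotient.mk _ '' {y | y * x⁻¹ ∈ S} := by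
  ext b
  induction b using Quotient.inductionOn with | h y => ?_
  refine (mk_mem_rightCosetEntourage_iff hS).trans ⟨fun h => ⟨y, h, rfl⟩, ?_⟩
  rintro ⟨y', hy', he⟩
  rw [quotient_mk_rightRel_eq_iff] at he
  rw [show y * x⁻¹ = y * y'⁻¹ * (y' * x⁻¹) * 1 by group]
  exact hS (mul_mem_mul (mul_mem_mul he hy') H.one_mem)

end RightCosets

section Topology

variable [TopologicalSpace G] {H : Subgroup G}

def Subgroup.IsStronglyNeutral (H : Subgroup G) : Prop :=
  ∀ O : Set G, IsOpen O → (H : Set G) ⊆ O →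
    ∃ W : Set G, IsOpen W ∧ (1 : G) ∈ W ∧ (H : Set G) * W ⊆ O

theorem Subgroup.isStronglyNeutral_of_hasBasis_nhdsSet {V : ℕ → Set G}
    (hV : (𝓝ˢ (H : Set G)).HasBasis (fun _ => True) V) (hopen : ∀ n, IsOpen (V n))
    (hsq : ∀ n, V (n + 1) * V (n + 1) ⊆ V n) : H.IsStronglyNeutral := by
  intro O hO hHO
  obtain ⟨n, -, hn⟩ := hV.mem_iff.1 (hO.mem_nhdsSet.2 hHO)
  have hHV : (H : Set G) ⊆ V (n + 1) := subset_of_mem_nhdsSet (hV.mem_of_mem trivial)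
  exact ⟨V (n + 1), hopen _, hHV H.one_mem, (mul_subset_mul_right hHV).trans ((hsq n).trans hn)⟩

variable [IsTopologicalGroup G]

variable (H) in
theorem isOpenQuotientMap_quotient_mk_rightRel : IsOpenQuotientMap (Quotient.mk (rightRel H)) :=
  MulAction.isOpenQuotientMap_quotientMk

theorem Subgroup.IsStronglyNeutral.isClosed_mul (hH : H.IsStronglyNeutral) {C : Set G}
    (hC : IsClosed C) : IsClosed ((H : Set G) * C) := by
  refine isOpen_compl_iff.1 (isOpen_iff_mem_nhds.2 fun x hx => ?_)
  have hHx : (H : Set G) ⊆ (· * x) ⁻¹' Cᶜ := fun h hh hc =>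
    hx ⟨h⁻¹, H.inv_mem hh, h * x, hc, inv_mul_cancel_left h x⟩
  obtain ⟨W, hWo, hW1, hHW⟩ := hH _ (hC.isOpen_compl.preimage (continuous_mul_const x)) hHx
  have hW : (· * x⁻¹) ⁻¹' W ∈ 𝓝 x :=
    (continuous_mul_const x⁻¹).continuousAt.preimage_mem_nhds
      (hWo.mem_nhds (by rwa [mul_inv_cancel]))
  filter_upwards [hW]
  rintro _ hw ⟨h, hh, c, hc, rfl⟩
  have : h⁻¹ * (h * c * x⁻¹) * x ∉ C := hHW ⟨h⁻¹, H.inv_mem hh, _, hw, rfl⟩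
  rw [show h⁻¹ * (h * c * x⁻¹) * x = c by group] at this
  exact this hc

theorem Subgroup.IsStronglyNeutral.isClosedMap_quotient_mk (hH : H.IsStronglyNeutral) :
    IsClosedMap (Quotient.mk (rightRel H)) := fun C hC => by
  rw [← (isOpenQuotientMap_quotient_mk_rightRel H).isQuotientMap.isClosed_preimage,
    preimage_image_quotient_mk_rightRel]
  exact hH.isClosed_mul hC

theorem hasBasis_nhds_quotient_mk_rightRel {S : ℕ → Set G}
    (hS : (𝓝ˢ (H : Set G)).HasBasis (fun _ => True) S) (x : G) :
    (𝓝 (Quotient.mk (rightRel H) x)).HasBasis (fun _ => True)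
      fun n => Quotient.mk _ '' {y | y * x⁻¹ ∈ S n} := by
  have hmk := isOpenQuotientMap_quotient_mk_rightRel H
  refine ⟨fun U => ⟨fun hU => ?_, fun ⟨n, _, hn⟩ => mem_of_superset ?_ hn⟩⟩
  · have : (· * x) ⁻¹' (Quotient.mk _ ⁻¹' U) ∈ 𝓝ˢ (H : Set G) := by
      refine mem_nhdsSet_iff_forall.2 fun h hh => ?_
      refine (continuous_mul_const x).continuousAt.preimage_mem_nhds
        (hmk.continuous.continuousAt.preimage_mem_nhds ?_)
      have : Quotient.mk (rightRel H) (h * x) = Quotient.mk _ x :=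
        (quotient_mk_rightRel_eq_iff H).2 (by simpa using hh)
      rwa [this]
    obtain ⟨n, -, hn⟩ := hS.mem_iff.1 this
    refine ⟨n, trivial, image_subset_iff.2 fun y hy => ?_⟩
    simpa using hn hy
  · refine hmk.isOpenMap.image_mem_nhds ?_
    have : S n ∈ 𝓝 (x * x⁻¹) := by
      rw [mul_inv_cancel]
      exact mem_nhdsSet_iff_forall.1 (hS.mem_of_mem trivial) 1 H.one_mem
    exact (continuous_mul_const x⁻¹).continuousAt.preimage_mem_nhds this

theorem metrizableSpace_quotient_rightRel [T1Space G] {S : ℕ → Set G}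
    (hS : (𝓝ˢ (H : Set G)).HasBasis (fun _ => True) S)
    (hsat : ∀ n, (H : Set G) * S n * H ⊆ S n) (hinv : ∀ n, (S n)⁻¹ ⊆ S n)
    (hanti : Antitone S) (hcomp : ∀ n, ∃ m, S m * S m ⊆ S n) :
    TopologicalSpace.MetrizableSpace (Quotient (rightRel H)) := by
  have hE n {x y : G} := mk_mem_rightCosetEntourage_iff (hsat n) (x := x) (y := y)
  refine metrizableSpace_of_hasBasis_nhds_ball (D := fun n => rightCosetEntourage H (S n))
    (fun m n hmn => image_mono fun p hp => hanti hmn hp) ?_ ?_ ?_ ?_ ?_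
  · rintro n ⟨x⟩
    exact (hE n).2 (by simpa using subset_of_mem_nhdsSet (hS.mem_of_mem trivial) H.one_mem)
  · rintro n ⟨x⟩ ⟨y⟩ h
    exact (hE n).2 (by simpa using hinv n (inv_mem_inv.2 ((hE n).1 h)))
  · intro n
    obtain ⟨m, hm⟩ := hcomp n
    refine ⟨m, ?_⟩
    rintro ⟨⟨x⟩, ⟨z⟩⟩ ⟨⟨y⟩, hxy, hyz⟩
    refine (hE n).2 ?_
    rw [show z * x⁻¹ = z * y⁻¹ * (y * x⁻¹) by group]
    exact hm (mul_mem_mul ((hE m).1 hyz) ((hE m).1 hxy))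
  · rintro ⟨x⟩ ⟨y⟩ h
    refine (quotient_mk_rightRel_eq_iff H).2 ?_
    rw [← SetLike.mem_coe, ← iInter_eq_of_hasBasis_nhdsSet hS]
    exact mem_iInter.2 fun n => (hE n).1 (h n)
  · refine Quotient.ind fun x => ?_
    simpa only [ball_mk_rightCosetEntourage (hsat _)] using hasBasis_nhds_quotient_mk_rightRel hS x

theorem metrizableSpace_quotient_rightRel_of_hasBasis [T1Space G] {V : ℕ → Set G}
    (hV : (𝓝ˢ (H : Set G)).HasBasis (fun _ => True) V) (hopen : ∀ n, IsOpen (V n))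
    (hsq : ∀ n, V (n + 1) * V (n + 1) ⊆ V n) :
    TopologicalSpace.MetrizableSpace (Quotient (rightRel H)) := by
  set W := fun n => V n ∩ (V n)⁻¹
  have hHV n : (H : Set G) ⊆ V n := subset_of_mem_nhdsSet (hV.mem_of_mem trivial)
  have hHW n : (H : Set G) ⊆ W n :=
    subset_inter (hHV n) (by rw [← inv_subset, inv_coe_set]; exact hHV n)
  have hWsq n : W (n + 1) * W (n + 1) ⊆ W n := mul_inter_inv_subset (hsq n)
  have hWanti : Antitone W := antitone_of_mul_subset (fun n => hHW n H.one_mem) hWsq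
  refine metrizableSpace_quotient_rightRel (S := fun n => H * W n * H) ?_ ?_ ?_
    (fun m n hmn => mul_subset_mul_right (mul_subset_mul_left (hWanti hmn)))
    fun n => ⟨n + 2, doubleCoset_mul_doubleCoset_subset hHW hWsq n⟩
  · refine hV.to_hasBasis' (fun n _ => ⟨n + 2, trivial,
      (coe_mul_mul_coe_subset hHW hWsq n).trans inter_subset_left⟩) fun n _ => ?_
    refine (((hopen n).inter (hopen n).inv).mul_left.mul_right).mem_nhdsSet.2 ?_
    exact (subset_mul_left _ (hHW n H.one_mem)).trans (subset_mul_left _ H.one_mem)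
  · intro n
    simp only [mul_assoc]
    rw [← mul_assoc (H : Set G) H, coe_mul_coe]
  · intro n
    simp only [mul_inv_rev, inv_coe_set, W, inter_inv, inv_inv, inter_comm, mul_assoc, subset_refl]

end Topology

end Group

/-- if a subgroup `H` of a topological group `G` has a countable
neighborhood base `{V n}` of open sets with `V (n+1) * V (n+1) ⊆ V n`, then `H` is
strongly neutral, the quotient map `G → H\G` is closed and open, and `H\G` is
metrizable. -/
theorem stmt_10 {G : Type*} [Group G] [TopologicalSpace G] [IsTopologicalGroup G] [T2Space G]
    (H : Subgroup G) (V : ℕ → Set G)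
    (hopen : ∀ n, IsOpen (V n)) (hsub : ∀ n, (H : Set G) ⊆ V n)
    (hbase : ∀ O : Set G, IsOpen O → (H : Set G) ⊆ O → ∃ n, V n ⊆ O)
    (hsq : ∀ n, V (n + 1) * V (n + 1) ⊆ V n) :
    (∀ O : Set G, IsOpen O → (H : Set G) ⊆ O →
      ∃ W : Set G, IsOpen W ∧ (1 : G) ∈ W ∧ (H : Set G) * W ⊆ O) ∧
    IsClosedMap (Quotient.mk (QuotientGroup.rightRel H) : G → _) ∧
    IsOpenMap (Quotient.mk (QuotientGroup.rightRel H) : G → _) ∧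
    TopologicalSpace.MetrizableSpace (Quotient (QuotientGroup.rightRel H)) := by
  have hV : (𝓝ˢ (H : Set G)).HasBasis (fun _ => True) V :=
    (hasBasis_nhdsSet _).to_hasBasis'
      (fun O ⟨hO, hHO⟩ => let ⟨n, hn⟩ := hbase O hO hHO; ⟨n, trivial, hn⟩)
      fun n _ => (hopen n).mem_nhdsSet.2 (hsub n)
  have hH : H.IsStronglyNeutral := Subgroup.isStronglyNeutral_of_hasBasis_nhdsSet hV hopen hsq
  exact ⟨hH, hH.isClosedMap_quotient_mk, (isOpenQuotientMap_quotient_mk_rightRel H).isOpenMap,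
    metrizableSpace_quotient_rightRel_of_hasBasis hV hopen hsq⟩
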